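/- arXiv:1803.09485 — 2 statements merged into one kernel-verified Lean document; each statement's English description precedes it below -/
import Mathlib

section
/- Let T ⊆ ω^{<ω} be an infinite h-bounded tree for some h ∈ ω^ω. If A ⊆ ω is nonempty and E_A ≤_s [T], then A is recursively enumerable in T ⊕ h. -/
/-!  Common definitions: mass problems in Baire space, Medvedev reducibility,
enumeration reducibility, trees, and related notions. -/

/-- A Turing functional, given by a monotone partial recursive map taking a
finite initial segment of the oracle and an input to an output value. -/
structure TuringFunctional where
  app : List ℕ × ℕ →. ℕ
  partrec : Partrec app
  mono : ∀ {σ τ : List ℕ} {n y : ℕ}, σ <+: τ → y ∈ app (σ, n) → y ∈ app (τ, n)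

/-- `Φ.Total g f` means that `Φ(g)` is total and equals `f`. -/
def TuringFunctional.Total (Φ : TuringFunctional) (g f : ℕ → ℕ) : Prop :=
  ∀ n, ∃ k, f n ∈ Φ.app ((List.range k).map g, n)

/-- Medvedev reducibility `A ≤ₛ B` between mass problems. -/
def MedvedevLE (A B : Set (ℕ → ℕ)) : Prop :=
  ∃ Φ : TuringFunctional, ∀ g ∈ B, ∃ f, Φ.Total g f ∧ f ∈ A

/-- Medvedev equivalence. -/
def MedvedevEquiv (A B : Set (ℕ → ℕ)) : Prop := MedvedevLE A B ∧ MedvedevLE B A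

/-- The problem of enumerability of `A`: all functions with range `A`. -/
def EProb (A : Set ℕ) : Set (ℕ → ℕ) := {f | Set.range f = A}

/-- The graph of `f`, coded as a set of naturals via the pairing function. -/
def graphSet (f : ℕ → ℕ) : Set ℕ := Set.range fun n => Nat.pair n (f n)

/-- The `e`-th enumeration operator applied to a set `B`:
`x` is enumerated iff for some (code `u` of a) finite list contained in `B`,
the `e`-th partial recursive function halts on `⟨x, u⟩`. -/
def enumOpApply (e : ℕ) (B : Set ℕ) : Set ℕ :=
  {x | ∃ u : ℕ, ((Denumerable.ofNat Nat.Partrec.Code e).eval (Nat.pair x u)).Dom ∧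
        ∀ y ∈ Denumerable.ofNat (List ℕ) u, y ∈ B}

/-- Enumeration reducibility between subsets of `ℕ`. -/
def EnumLE (A B : Set ℕ) : Prop := ∃ e : ℕ, enumOpApply e B = A

/-- Enumeration equivalence. -/
def EnumEquiv (A B : Set ℕ) : Prop := EnumLE A B ∧ EnumLE B A

/-- `A` is recursively enumerable: it is the domain of a partial recursive function. -/
def REset (A : Set ℕ) : Prop := ∃ c : Nat.Partrec.Code, A = {x | (c.eval x).Dom}

/-- `A` is quasiminimal: not r.e., and every total function whose graph
enumeration-reduces to `A` is recursive. -/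
def Quasiminimal (A : Set ℕ) : Prop :=
  ¬ REset A ∧ ∀ f : ℕ → ℕ, EnumLE (graphSet f) A → Computable f

/-- `A` (as a set) has cototal enumeration degree. -/
def CototalDeg (A : Set ℕ) : Prop := ∃ B : Set ℕ, EnumEquiv B A ∧ EnumLE B Bᶜ

/-- The set `K_A = {⟨e,x⟩ : x ∈ Ψ_e(A)}`. -/
def Kset (A : Set ℕ) : Set ℕ := {p | p.unpair.2 ∈ enumOpApply p.unpair.1 A}

/-- The skip of `A`. -/
def skipSet (A : Set ℕ) : Set ℕ := (Kset A)ᶜ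

/-- The recursive join of two subsets of `ℕ`. -/
def joinSet (A B : Set ℕ) : Set ℕ :=
  {n | (n % 2 = 0 ∧ n / 2 ∈ A) ∨ (n % 2 = 1 ∧ n / 2 ∈ B)}

/-- `A` is recursively enumerable in (the characteristic function of) `X`,
i.e. `A ≤ₑ X ⊕ Xᶜ`. -/
def REin (A X : Set ℕ) : Prop := EnumLE A (joinSet X Xᶜ)

/-- Trees: subsets of `ω^{<ω}` closed under initial segments. -/
def IsTree (T : Set (List ℕ)) : Prop := ∀ ⦃σ τ : List ℕ⦄, σ <+: τ → τ ∈ T → σ ∈ T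

/-- A leaf of `T`: a node with no proper extension in `T`. -/
def IsLeaf (T : Set (List ℕ)) (σ : List ℕ) : Prop :=
  σ ∈ T ∧ ∀ τ ∈ T, σ <+: τ → τ = σ

/-- `T` has no leaves. -/
def NoLeaves (T : Set (List ℕ)) : Prop := ∀ σ ∈ T, ¬ IsLeaf T σ

/-- `T` is finitely branching. -/
def FinBranching (T : Set (List ℕ)) : Prop := ∀ σ ∈ T, {n : ℕ | σ ++ [n] ∈ T}.Finite

/-- `[T]`: the set of infinite paths through `T`. -/
def Paths (T : Set (List ℕ)) : Set (ℕ → ℕ) := {f | ∀ n, (List.range n).map f ∈ T}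

/-- A tree coded as a subset of `ℕ`. -/
def codeTree (T : Set (List ℕ)) : Set ℕ := Encodable.encode '' T

/-- `T` is `h`-bounded. -/
def BoundedTree (h : ℕ → ℕ) (T : Set (List ℕ)) : Prop :=
  ∀ σ ∈ T, ∀ i : ℕ, ∀ hi : i < σ.length, σ.get ⟨i, hi⟩ < h i

/-- A uniformly e-pointed tree with respect to functions. -/
def UEPfun (T : Set (List ℕ)) : Prop :=
  IsTree T ∧ FinBranching T ∧ NoLeaves T ∧
    ∃ e : ℕ, ∀ g ∈ Paths T, enumOpApply e (graphSet g) = codeTree T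

/-- A uniformly e-pointed tree with respect to sets (a subtree of `2^{<ω}`). -/
def UEPset (T : Set (List ℕ)) : Prop :=
  IsTree T ∧ (∀ σ ∈ T, ∀ i ∈ σ, i ≤ 1) ∧ NoLeaves T ∧
    ∃ e : ℕ, ∀ g ∈ Paths T, enumOpApply e {n | g n = 1} = codeTree T

/-- Prepend `i` to a function. -/
def consFun (i : ℕ) (f : ℕ → ℕ) : ℕ → ℕ := fun n => Nat.casesOn n i fun m => f m

/-- The mass problem `0⌢A ∪ 1⌢B`, representing the meet of the degrees of `A` and `B`. -/
def meetProb (A B : Set (ℕ → ℕ)) : Set (ℕ → ℕ) := consFun 0 '' A ∪ consFun 1 '' B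

/-- A mass problem has meet-irreducible Medvedev degree: its degree is not the
meet of two strictly larger degrees. -/
def MeetIrred (X : Set (ℕ → ℕ)) : Prop :=
  ¬ ∃ B C : Set (ℕ → ℕ), MedvedevEquiv (meetProb B C) X ∧
      (MedvedevLE X B ∧ ¬ MedvedevLE B X) ∧ (MedvedevLE X C ∧ ¬ MedvedevLE C X)

/-- `σ` is an initial segment of `f`. -/
def strPrefix (σ : List ℕ) (f : ℕ → ℕ) : Prop := (List.range σ.length).map f = σ

/-- A uniform mass problem. -/
def UniformProb (A : Set (ℕ → ℕ)) : Prop :=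
  ∀ σ : List ℕ, (∃ f ∈ A, strPrefix σ f) → MedvedevLE {f | f ∈ A ∧ strPrefix σ f} A

/-- The `{0,1}`-valued diagonally nonrecursive functions. -/
def DNR2 : Set (ℕ → ℕ) :=
  {f | (∀ n, f n ≤ 1) ∧
    ∀ e y : ℕ, y ∈ (Denumerable.ofNat Nat.Partrec.Code e).eval e → f e ≠ y}

/-- `C_A`: injective enumerations of subsets of `A`. -/
def CProb (A : Set ℕ) : Set (ℕ → ℕ) :=
  {f | Function.Injective f ∧ Set.range f ⊆ A}

/-! By monotonicity of `Φ`, `x ∈ A` iff for some level `k`, every string of length `k` that is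
bounded by `h` either lies outside `T` or already makes `Φ` output `x`. If such a `k` exists, the
level-`k` node of a path `g` through `T` (König's lemma) is such a string, so `x` is in the range of
`Φ(g)`, which is `A`. Conversely, if `x ∈ A`, the nodes of `T` on which `Φ` never outputs `x` form
an `h`-bounded tree without infinite paths, hence a finite one, and any level above its height
works. The condition is existential in finitely many facts `h i = v` and `σ ∉ T` plus a halting
time, so it is an enumeration operator applied to `T ⊕ h` joined with its complement. -/

open Encodable Nat.Partrec

theorem mem_joinSet_two_mul {A B : Set ℕ} {n : ℕ} : 2 * n ∈ joinSet A B ↔ n ∈ A := by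
  simp [joinSet]

theorem mem_joinSet_two_mul_add_one {A B : Set ℕ} {n : ℕ} : 2 * n + 1 ∈ joinSet A B ↔ n ∈ B := by
  simp [joinSet, show (2 * n + 1) / 2 = n by omega, Nat.add_mod]

theorem pair_mem_graphSet {f : ℕ → ℕ} {i v : ℕ} : Nat.pair i v ∈ graphSet f ↔ f i = v := by
  simp [graphSet, Nat.pair_eq_pair]

theorem encode_mem_codeTree {T : Set (List ℕ)} {σ : List ℕ} : encode σ ∈ codeTree T ↔ σ ∈ T :=
  Encodable.encode_injective.mem_set_image

section Konig

variable {T : Set (List ℕ)} {h : ℕ → ℕ}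

theorem exists_infinite_extensions_append (hbd : BoundedTree h T) {σ : List ℕ}
    (hσ : {τ ∈ T | σ <+: τ}.Infinite) : ∃ a, {τ ∈ T | σ ++ [a] <+: τ}.Infinite := by
  by_contra! hfin
  refine hσ (((Set.finite_singleton σ).union
    ((Set.finite_Iio (h σ.length)).biUnion fun a _ => hfin a)).subset ?_)
  rintro τ ⟨hτ, _ | ⟨a, ρ⟩, rfl⟩
  · simp
  · have ha : a < h σ.length := by simpa using hbd _ hτ σ.length (by simp)
    exact Or.inr (Set.mem_biUnion ha ⟨hτ, ρ, by simp⟩)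

theorem exists_mem_paths (hT : IsTree T) (hbd : BoundedTree h T) (hinf : T.Infinite) :
    (Paths T).Nonempty := by
  let S := {σ : List ℕ // {τ ∈ T | σ <+: τ}.Infinite}
  choose next hnext using fun σ : S => exists_infinite_extensions_append hbd σ.2
  let node : ℕ → S := fun n =>
    Nat.rec ⟨[], by simpa using hinf⟩ (fun _ σ => ⟨σ.1 ++ [next σ], hnext σ⟩) n
  have hnode : ∀ n, (node n).1 = (List.range n).map fun i => next (node i) := by
    intro n
    induction n with
    | zero => rfl
    | succ n ih => rw [List.range_succ, List.map_append, ← ih]; rfl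
  refine ⟨fun i => next (node i), fun n => ?_⟩
  obtain ⟨τ, hτ, hpre⟩ := (node n).2.nonempty
  exact hT (hnode n ▸ hpre) hτ

theorem BoundedTree.lt_of_mem_paths (hbd : BoundedTree h T) {g : ℕ → ℕ} (hg : g ∈ Paths T)
    (i : ℕ) : g i < h i := by
  simpa using hbd _ (hg (i + 1)) i (by simp)

end Konig

theorem map_range_prefix_map_range (g : ℕ → ℕ) {m n : ℕ} (hmn : m ≤ n) :
    (List.range m).map g <+: (List.range n).map g := by
  rw [← Nat.min_eq_left hmn, ← List.take_range, List.map_take]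
  exact List.take_prefix _ _

theorem TuringFunctional.Total.eq_of_mem {Φ : TuringFunctional} {g f : ℕ → ℕ}
    (hf : Φ.Total g f) {k n y : ℕ} (hy : y ∈ Φ.app ((List.range k).map g, n)) : y = f n := by
  obtain ⟨k', hk'⟩ := hf n
  rcases le_total k k' with hle | hle
  · exact Part.mem_unique (Φ.mono (map_range_prefix_map_range g hle) hy) hk'
  · exact Part.mem_unique hy (Φ.mono (map_range_prefix_map_range g hle) hk')

theorem Partrec.exists_code_eval_encode {α : Type*} [Primcodable α] {f : α →. ℕ}
    (hf : Partrec f) : ∃ c : Code, ∀ a, c.eval (encode a) = f a := by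
  obtain ⟨c, hc⟩ := Code.exists_code.1 hf
  exact ⟨c, fun a => by simp [hc, Part.map_id' (f := encode) fun _ => rfl]⟩

theorem Code.eventually_evaln_eq_some {c : Code} {m x : ℕ} (hx : x ∈ c.eval m) :
    ∀ᶠ t in Filter.atTop, m < t ∧ c.evaln t m = some x := by
  obtain ⟨t₀, ht₀⟩ := Code.evaln_complete.1 hx
  filter_upwards [Filter.eventually_ge_atTop t₀] with t ht
  have hxt := Code.evaln_mono ht ht₀
  exact ⟨Code.evaln_bound hxt, hxt⟩

theorem Primrec.list_sections {α : Type*} [Primcodable α] :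
    Primrec (List.sections : List (List α) → List (List α)) := by
  have hstep : Primrec₂ fun (_ : List (List α)) (p : List α × List (List α)) =>
      p.2.flatMap fun s => p.1.map (· :: s) :=
    (Primrec.list_flatMap (Primrec.snd.comp Primrec.snd)
      (Primrec.list_map (Primrec.fst.comp (Primrec.snd.comp Primrec.fst))
        (Primrec.list_cons.comp Primrec.snd (Primrec.snd.comp Primrec.fst)).to₂).to₂).to₂
  refine (Primrec.list_foldr Primrec.id (Primrec.const [[]]) hstep).of_eq fun L => ?_
  induction L with
  | nil => rfl
  | cons l L ih => simpa using congrArg (List.flatMap fun s => l.map (· :: s)) ih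

theorem Primrec.list_mem {α : Type*} [Primcodable α] :
    PrimrecRel fun (a : α) (L : List α) => a ∈ L :=
  (Primrec.eq.swap.exists_mem_list.swap).of_eq fun a L => by simp

theorem enumLE_of_primrecRel {B : Set ℕ} {R : ℕ × List ℕ → ℕ → Prop} (hR : PrimrecRel R) :
    EnumLE {x | ∃ L : List ℕ, (∃ n, R (x, L) n) ∧ ∀ y ∈ L, y ∈ B} B := by
  classical
  let search : ℕ →. ℕ := fun z =>
    Nat.rfind fun n => Part.some (decide (R (z.unpair.1, Denumerable.ofNat (List ℕ) z.unpair.2) n))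
  have hsearch : Partrec search := by
    refine Partrec.rfind (Primrec₂.to_comp ?_).partrec₂
    exact hR.decide.comp₂ ((Primrec.fst.comp (Primrec.unpair.comp Primrec.fst)).pair
      ((Primrec.ofNat _).comp (Primrec.snd.comp (Primrec.unpair.comp Primrec.fst)))) Primrec₂.right
  obtain ⟨c, hc⟩ := Code.exists_code.1 (Partrec.nat_iff.1 hsearch)
  refine ⟨encode c, Set.ext fun x => ?_⟩
  have hdom : ∀ L, (search (Nat.pair x (encode L))).Dom ↔ ∃ n, R (x, L) n := by
    intro L
    refine Nat.rfind_dom.trans ?_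
    simp
  simp only [enumOpApply, Denumerable.ofNat_encode, hc, Set.mem_ofPred_eq]
  constructor
  · rintro ⟨u, hu, hL⟩
    rw [← Denumerable.encode_ofNat (α := List ℕ) u, hdom] at hu
    exact ⟨_, hu, hL⟩
  · rintro ⟨L, hL, hLB⟩
    exact ⟨encode L, (hdom L).2 hL, by simpa using hLB⟩

section Certificates

variable {T : Set (List ℕ)} {h : ℕ → ℕ} {Φ : TuringFunctional} {c : Code}

local notation "facts" =>
  joinSet (joinSet (codeTree T) (graphSet h)) (joinSet (codeTree T) (graphSet h))ᶜ

-- The positions of the facts `h i = v` and `σ ∉ T` in `facts`.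
def valueClaim (i v : ℕ) : ℕ := 2 * (2 * Nat.pair i v + 1)

def absentClaim (σ : List ℕ) : ℕ := 2 * (2 * encode σ) + 1

theorem valueClaim_mem_iff {i v : ℕ} : valueClaim i v ∈ facts ↔ h i = v := by
  rw [valueClaim, mem_joinSet_two_mul, mem_joinSet_two_mul_add_one, pair_mem_graphSet]

theorem absentClaim_mem_iff {σ : List ℕ} : absentClaim σ ∈ facts ↔ σ ∉ T := by
  rw [absentClaim, mem_joinSet_two_mul_add_one, Set.mem_compl_iff, mem_joinSet_two_mul,
    encode_mem_codeTree]

theorem primrec_valueClaim : Primrec₂ valueClaim :=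
  Primrec.nat_double.comp₂ (Primrec.succ.comp₂ (Primrec.nat_double.comp₂ Primrec₂.natPair))

theorem primrec_absentClaim : Primrec absentClaim :=
  Primrec.nat_double_succ.comp (Primrec.nat_double.comp Primrec.encode)

/-- `w = (vs, t)`, where `vs` claims the values `h 0, …, h (vs.length - 1)` and `t` bounds the
halting times. -/
def Certificate (c : Code) (x : ℕ) (L : List ℕ) (w : List ℕ × ℕ) : Prop :=
  (∀ i < w.1.length, valueClaim i (w.1.getD i 0) ∈ L) ∧
    ∀ σ ∈ (w.1.map List.range).sections,
      absentClaim σ ∈ L ∨ ∃ n < w.2, c.evaln w.2 (encode (σ, n)) = some x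

open Primrec in
theorem primrecPred_certificate (c : Code) :
    PrimrecPred fun q : (ℕ × List ℕ) × (List ℕ × ℕ) => Certificate c q.1.1 q.1.2 q.2 := by
  have hvalues : PrimrecRel fun (i : ℕ) (q : (ℕ × List ℕ) × (List ℕ × ℕ)) =>
      valueClaim i (q.2.1.getD i 0) ∈ q.1.2 :=
    list_mem.comp (primrec_valueClaim.comp fst ((list_getD 0).comp (fst.comp (snd.comp snd)) fst))
      (snd.comp (fst.comp snd))
  have houtput : PrimrecRel fun (n : ℕ) (p : List ℕ × ((ℕ × List ℕ) × (List ℕ × ℕ))) =>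
      c.evaln p.2.2.2 (encode (p.1, n)) = some p.2.1.1 :=
    Primrec.eq.comp (Code.primrec_evaln.comp (((snd.comp (snd.comp (snd.comp snd))).pair
        (const c)).pair (Primrec.encode.comp ((fst.comp snd).pair fst))))
      (option_some.comp (fst.comp (fst.comp (snd.comp snd))))
  have hstrings : PrimrecRel fun (σ : List ℕ) (q : (ℕ × List ℕ) × (List ℕ × ℕ)) =>
      absentClaim σ ∈ q.1.2 ∨ ∃ n ∈ List.range q.2.2, c.evaln q.2.2 (encode (σ, n)) = some q.1.1 :=
    (list_mem.comp (primrec_absentClaim.comp fst) (snd.comp (fst.comp snd))).or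
      (houtput.exists_mem_list.comp (list_range.comp (snd.comp (snd.comp snd))) Primrec.id)
  refine ((hvalues.forall_mem_list.comp (list_range.comp (list_length.comp (fst.comp snd)))
    Primrec.id).and (hstrings.forall_mem_list.comp
      (list_sections.comp (list_map (fst.comp snd) (list_range.comp snd).to₂)) Primrec.id)).of_eq
    fun q => ?_
  simp [Certificate]

theorem mem_range_of_certificate (hbd : BoundedTree h T) {g f : ℕ → ℕ} (hg : g ∈ Paths T)
    (hf : Φ.Total g f) (hc : ∀ a, c.eval (encode a) = Φ.app a) {x : ℕ} {L : List ℕ}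
    {w : List ℕ × ℕ} (hL : ∀ y ∈ L, y ∈ facts) (hw : Certificate c x L w) : x ∈ Set.range f := by
  obtain ⟨vs, t⟩ := w
  obtain ⟨hvalues, hstrings⟩ := hw
  have hvs : vs = (List.range vs.length).map h := by
    refine List.ext_getElem (by simp) fun i hi _ => ?_
    simpa [hi, eq_comm] using valueClaim_mem_iff.1 (hL _ (hvalues i hi))
  set k := vs.length
  have hnode : (List.range k).map g ∈ (vs.map List.range).sections := by
    rw [List.mem_sections, List.forall₂_map_right_iff, hvs, List.forall₂_map_left_iff,
      List.forall₂_map_right_iff, List.forall₂_same]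
    exact fun i _ => List.mem_range.2 (hbd.lt_of_mem_paths hg i)
  rcases hstrings _ hnode with habsent | ⟨n, -, hn⟩
  · exact absurd (hg _) (absentClaim_mem_iff.1 (hL _ habsent))
  · have hx : x ∈ Φ.app ((List.range k).map g, n) := hc _ ▸ Code.evaln_sound hn
    exact ⟨n, (hf.eq_of_mem hx).symm⟩

theorem finite_setOf_forall_not_mem_app (hT : IsTree T) (hbd : BoundedTree h T) {x : ℕ}
    (hΦ : ∀ g ∈ Paths T, ∃ f, Φ.Total g f ∧ x ∈ Set.range f) :
    {σ ∈ T | ∀ n, x ∉ Φ.app (σ, n)}.Finite := by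
  by_contra hinf
  have htree : IsTree {σ ∈ T | ∀ n, x ∉ Φ.app (σ, n)} := fun σ τ hστ ⟨hτ, hx⟩ =>
    ⟨hT hστ hτ, fun n hσ => hx n (Φ.mono hστ hσ)⟩
  obtain ⟨g, hg⟩ := exists_mem_paths htree (fun σ hσ => hbd σ hσ.1) hinf
  obtain ⟨f, hf, n, rfl⟩ := hΦ g fun k => (hg k).1
  obtain ⟨k, hk⟩ := hf n
  exact (hg k).2 n hk

theorem exists_certificate (hT : IsTree T) (hbd : BoundedTree h T) {x : ℕ}
    (hΦ : ∀ g ∈ Paths T, ∃ f, Φ.Total g f ∧ x ∈ Set.range f)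
    (hc : ∀ a, c.eval (encode a) = Φ.app a) :
    ∃ L : List ℕ, (∃ w, Certificate c x L w) ∧ ∀ y ∈ L, y ∈ facts := by
  classical
  obtain ⟨k, hk⟩ : ∃ k, ∀ σ ∈ T, (∀ n, x ∉ Φ.app (σ, n)) → σ.length < k := by
    obtain ⟨b, hb⟩ := ((finite_setOf_forall_not_mem_app hT hbd hΦ).image List.length).bddAbove
    exact ⟨b + 1, fun σ hσ hx => Nat.lt_succ_of_le (hb ⟨σ, ⟨hσ, hx⟩, rfl⟩)⟩
  set vs := (List.range k).map h
  set strings := (vs.map List.range).sections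
  set L := (List.range k).map (fun i => valueClaim i (h i)) ++
    (strings.filter (· ∉ T)).map absentClaim
  have hL : ∀ y ∈ L, y ∈ facts := by
    simp only [L, List.mem_append, List.mem_map, List.mem_filter]
    rintro _ (⟨i, -, rfl⟩ | ⟨σ, ⟨-, hσ⟩, rfl⟩)
    · exact valueClaim_mem_iff.2 rfl
    · exact absentClaim_mem_iff.2 (by simpa using hσ)
  have hstring : ∀ σ ∈ strings, ∀ᶠ t in Filter.atTop,
      absentClaim σ ∈ L ∨ ∃ n < t, c.evaln t (encode (σ, n)) = some x := by
    intro σ hσ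
    by_cases hσT : σ ∈ T
    · have hlen : σ.length = k := by simpa [vs] using List.mem_sections_length hσ
      obtain ⟨n, hn⟩ : ∃ n, x ∈ Φ.app (σ, n) := by
        by_contra! hno
        exact (hk σ hσT hno).ne hlen
      filter_upwards [Code.eventually_evaln_eq_some ((hc (σ, n)).symm ▸ hn)] with t ht
      refine Or.inr ⟨n, lt_of_le_of_lt ?_ ht.1, ht.2⟩
      simpa [Encodable.encode_prod_val] using Nat.right_le_pair (encode σ) n
    · refine Filter.Eventually.of_forall fun _ => Or.inl ?_
      exact List.mem_append_right _ (List.mem_map.2 ⟨σ, List.mem_filter.2 ⟨hσ, by simpa⟩, rfl⟩)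
  obtain ⟨t, ht⟩ := ((List.finite_toSet strings).eventually_all.2 hstring).exists
  refine ⟨L, ⟨(vs, t), fun i hi => ?_, ht⟩, hL⟩
  simp only [vs, List.length_map, List.length_range] at hi
  exact List.mem_append_left _ (List.mem_map.2 ⟨i, List.mem_range.2 hi, by simp [vs, hi]⟩)

end Certificates

theorem stmt4_general (T : Set (List ℕ)) (h : ℕ → ℕ) (A : Set ℕ)
    (hT : IsTree T) (hinf : T.Infinite) (hbd : BoundedTree h T)
    (hle : MedvedevLE (EProb A) (Paths T)) :
    REin A (joinSet (codeTree T) (graphSet h)) := by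
  obtain ⟨Φ, hΦ⟩ := hle
  obtain ⟨c, hc⟩ := Φ.partrec.exists_code_eval_encode
  have hR : PrimrecRel fun (p : ℕ × List ℕ) (n : ℕ) =>
      Certificate c p.1 p.2 (Denumerable.ofNat (List ℕ × ℕ) n) :=
    (primrecPred_certificate c).comp (Primrec.fst.pair ((Primrec.ofNat _).comp Primrec.snd))
  unfold REin
  convert enumLE_of_primrecRel hR using 1
  ext x
  constructor
  · intro hx
    have hΦx : ∀ g ∈ Paths T, ∃ f, Φ.Total g f ∧ x ∈ Set.range f := fun g hg => by
      obtain ⟨f, hf, hfA⟩ := hΦ g hg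
      exact ⟨f, hf, (hfA : Set.range f = A) ▸ hx⟩
    obtain ⟨L, ⟨w, hw⟩, hL⟩ := exists_certificate hT hbd hΦx hc
    exact ⟨L, ⟨encode w, by simpa only [Denumerable.ofNat_encode] using hw⟩, hL⟩
  · rintro ⟨L, ⟨n, hn⟩, hL⟩
    obtain ⟨g, hg⟩ := exists_mem_paths hT hbd hinf
    obtain ⟨f, hf, hfA⟩ := hΦ g hg
    exact hfA ▸ mem_range_of_certificate hbd hg hf hc hL hn

/-- If `T` is an infinite `h`-bounded tree and `E_A ≤ₛ [T]` for a nonempty `A`,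
then `A` is r.e. in `T ⊕ h`. -/
theorem stmt4 (T : Set (List ℕ)) (h : ℕ → ℕ) (A : Set ℕ)
    (hT : IsTree T) (hinf : T.Infinite) (hbd : BoundedTree h T)
    (hA : A.Nonempty) (hle : MedvedevLE (EProb A) (Paths T)) :
    REin A (joinSet (codeTree T) (graphSet h)) :=
  stmt4_general T h A hT hinf hbd hle
end

section
/- For every uniformly e-pointed tree T ⊆ ω^{<ω} with respect to functions, there is a uniformly e-pointed tree S ⊆ 2^{<ω} with respect to sets such that S ≡_e T; moreover S can be chosen so that [S] = {χ_{graph(f)} : f ∈ [T]}, the set of characteristic functions of graphs of paths of T. -/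
/-! The tree `S` is the tree of initial segments of the characteristic functions
`graphChar f = χ_{graph f}`, `f ∈ [T]`. Since `T` is finitely branching, `[T]` is compact, so this
set of characteristic functions is closed and is exactly `[S]`. A node `σ` of `S` is read off
from any node of `T` of length `|σ|`, and a node `τ` of `T` is certified by any node of `S` that
marks all pairs `⟨k, τ k⟩`; both are primitive recursive relations between finite sequences,
hence `S ≡ₑ T`. Finally `(graphChar f)⁺ = graph f` enumerates `T` uniformly, hence also `S`. -/

theorem strPrefix_iff {σ : List ℕ} {g : ℕ → ℕ} :
    strPrefix σ g ↔ ∀ i (hi : i < σ.length), g i = σ[i] := by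
  simp [strPrefix, List.ext_getElem_iff]

theorem strPrefix_map_range (g : ℕ → ℕ) (n : ℕ) : strPrefix ((List.range n).map g) g := by
  simp [strPrefix]

theorem getD_eq_of_strPrefix {τ : List ℕ} {f : ℕ → ℕ} (h : strPrefix τ f) {k : ℕ}
    (hk : k < τ.length) : τ.getD k 0 = f k := by
  rw [List.getD_eq_getElem _ _ hk, strPrefix_iff.1 h k hk]

theorem strPrefix_of_prefix {σ τ : List ℕ} {g : ℕ → ℕ} (h : strPrefix τ g) (hστ : σ <+: τ) :
    strPrefix σ g :=
  strPrefix_iff.2 fun i hi => by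
    rw [strPrefix_iff.1 h i (hi.trans_le hστ.length_le), hστ.getElem hi]

theorem map_range_prefix (g : ℕ → ℕ) {m n : ℕ} (h : m ≤ n) :
    (List.range m).map g <+: (List.range n).map g :=
  List.prefix_iff_eq_take.2 <| by
    rw [List.length_map, List.length_range, ← List.map_take, List.take_range, min_eq_left h]

theorem exists_forall_strPrefix {L : ℕ → List ℕ} (hmono : ∀ n, L n <+: L (n + 1))
    (hlen : ∀ n, n ≤ (L n).length) : ∃ f : ℕ → ℕ, ∀ n, strPrefix (L n) f := by
  have hmono' : ∀ {m n}, m ≤ n → L m <+: L n := fun h =>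
    Nat.le_induction (List.prefix_refl _) (fun n _ ih => ih.trans (hmono n)) _ h
  refine ⟨fun k => (L (k + 1)).getD k 0, fun n => strPrefix_iff.2 fun i hi => ?_⟩
  have hi' : i < (L (i + 1)).length := hlen (i + 1)
  rw [List.getD_eq_getElem _ _ hi']
  rcases le_total (i + 1) n with h | h
  · exact (hmono' h).getElem hi'
  · exact ((hmono' h).getElem hi).symm

section Trees

variable {T : Set (List ℕ)}

theorem IsTree.exists_append_singleton_mem (hTr : IsTree T) (hNL : NoLeaves T) {σ : List ℕ}
    (hσ : σ ∈ T) : ∃ n, σ ++ [n] ∈ T := by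
  have h := hNL σ hσ
  simp only [IsLeaf, not_and, not_forall] at h
  obtain ⟨_, hτ, ⟨l, rfl⟩, hne⟩ := h hσ
  cases l with
  | nil => simp at hne
  | cons a l => exact ⟨a, hTr ⟨l, by simp⟩ hτ⟩

theorem IsTree.exists_mem_paths_strPrefix (hTr : IsTree T) (hNL : NoLeaves T) {τ : List ℕ}
    (hτ : τ ∈ T) : ∃ f ∈ Paths T, strPrefix τ f := by
  choose next hnext using fun σ : T => hTr.exists_append_singleton_mem hNL σ.2
  let L : ℕ → T := fun n => Nat.rec ⟨τ, hτ⟩ (fun _ σ => ⟨σ.1 ++ [next σ], hnext σ⟩) n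
  have hlen : ∀ n, (L n).1.length = τ.length + n := fun n => by
    induction n with
    | zero => rfl
    | succ n ih =>
      change ((L n).1 ++ [next (L n)]).length = _
      rw [List.length_append, ih, List.length_singleton, Nat.add_assoc]
  obtain ⟨f, hf⟩ := exists_forall_strPrefix (L := fun n => (L n).1) (fun n => ⟨_, rfl⟩)
    (fun n => by rw [hlen]; omega)
  refine ⟨f, fun n => hTr ?_ (L n).2, hf 0⟩
  rw [← hf n]
  exact map_range_prefix f (by rw [hlen]; omega)

theorem IsTree.finite_setOf_length_eq (hTr : IsTree T) (hFB : FinBranching T) (n : ℕ) :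
    {σ ∈ T | σ.length = n}.Finite := by
  induction n with
  | zero => exact (Set.finite_singleton []).subset fun σ hσ => by simpa using hσ.2
  | succ n ih =>
    refine (ih.biUnion fun τ hτ => (hFB τ hτ.1).image (fun m => τ ++ [m])).subset ?_
    rintro σ ⟨hσ, hlen⟩
    have hne : σ ≠ [] := List.ne_nil_of_length_eq_add_one hlen
    have hsplit := List.dropLast_append_getLast hne
    refine Set.mem_biUnion (x := σ.dropLast) ⟨hTr (List.dropLast_prefix σ) hσ, by simp [hlen]⟩
      ⟨σ.getLast hne, by simpa [hsplit] using hσ, hsplit⟩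

theorem IsTree.exists_forall_paths_le (hTr : IsTree T) (hFB : FinBranching T) (k : ℕ) :
    ∃ N, ∀ f ∈ Paths T, f k ≤ N := by
  obtain ⟨N, hN⟩ :=
    ((hTr.finite_setOf_length_eq hFB (k + 1)).image fun σ => σ.getD k 0).bddAbove
  exact ⟨N, fun f hf => hN ⟨_, ⟨hf (k + 1), by simp⟩, by simp⟩⟩

end Trees

-- The paths of `prefixTree P` form the closure of `P` in Baire space.
def prefixTree (P : Set (ℕ → ℕ)) : Set (List ℕ) := {σ | ∃ g ∈ P, strPrefix σ g}

section PrefixTree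

variable {P : Set (ℕ → ℕ)}

theorem isTree_prefixTree : IsTree (prefixTree P) :=
  fun _ _ hστ ⟨g, hg, hτ⟩ => ⟨g, hg, strPrefix_of_prefix hτ hστ⟩

theorem noLeaves_prefixTree : NoLeaves (prefixTree P) := by
  rintro σ ⟨g, hg, hσ⟩ ⟨-, hleaf⟩
  have hext : σ <+: (List.range (σ.length + 1)).map g := by
    have h := map_range_prefix g (Nat.le_succ σ.length)
    rwa [show (List.range σ.length).map g = σ from hσ] at h
  simpa using congrArg List.length (hleaf _ ⟨g, hg, strPrefix_map_range g _⟩ hext)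

theorem subset_paths_prefixTree : P ⊆ Paths (prefixTree P) :=
  fun g hg n => ⟨g, hg, strPrefix_map_range g n⟩

theorem mem_paths_prefixTree {g : ℕ → ℕ} :
    g ∈ Paths (prefixTree P) ↔ ∀ n, ∃ h ∈ P, ∀ m < n, h m = g m := by
  refine forall_congr' fun n => exists_congr fun h => and_congr_right fun _ => ?_
  simp [strPrefix_iff]

theorem le_one_of_mem_prefixTree (hP : ∀ g ∈ P, ∀ n, g n ≤ 1) :
    ∀ σ ∈ prefixTree P, ∀ i ∈ σ, i ≤ 1 := by
  rintro σ ⟨g, hg, hσ⟩ i hi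
  rw [← hσ] at hi
  obtain ⟨m, -, rfl⟩ := List.mem_map.1 hi
  exact hP g hg m

end PrefixTree

def graphChar (f : ℕ → ℕ) : ℕ → ℕ := fun m => if f m.unpair.1 = m.unpair.2 then 1 else 0

theorem graphChar_le_one (f : ℕ → ℕ) (m : ℕ) : graphChar f m ≤ 1 := by
  unfold graphChar; split <;> simp

theorem graphChar_pair_eq_one {f : ℕ → ℕ} {k y : ℕ} : graphChar f (Nat.pair k y) = 1 ↔ f k = y := by
  simp [graphChar]

theorem graphChar_congr {f f' : ℕ → ℕ} {m : ℕ} (h : f m.unpair.1 = f' m.unpair.1) :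
    graphChar f m = graphChar f' m := by
  simp [graphChar, h]

theorem setOf_graphChar_eq_one (f : ℕ → ℕ) : {m | graphChar f m = 1} = graphSet f := by
  ext m
  refine ⟨fun h => ⟨m.unpair.1, ?_⟩, fun ⟨k, hk⟩ => hk ▸ graphChar_pair_eq_one.2 rfl⟩
  simp only [graphChar, ite_eq_left_iff] at h
  simp [not_imp_comm.1 h, Nat.pair_unpair]

theorem eq_of_graphChar_eqOn {f f' : ℕ → ℕ} {k n : ℕ}
    (h : ∀ m < n, graphChar f m = graphChar f' m) (hk : Nat.pair k (f k) < n) : f k = f' k :=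
  (graphChar_pair_eq_one.1 ((h _ hk).symm.trans (graphChar_pair_eq_one.2 rfl))).symm

-- `Paths T` is compact, so its image under `graphChar` is closed. Concretely, the values `a n k`
-- of the approximating paths stabilise once `n` exceeds every code `⟨k, f k⟩`, `f ∈ Paths T`,
-- a bound that finite branching provides.
theorem IsTree.paths_prefixTree_graphChar {T : Set (List ℕ)} (hTr : IsTree T)
    (hFB : FinBranching T) :
    Paths (prefixTree (graphChar '' Paths T)) = graphChar '' Paths T := by
  refine subset_antisymm (fun g hg => ?_) subset_paths_prefixTree
  simp only [mem_paths_prefixTree, Set.exists_mem_image] at hg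
  choose a ha hag using hg
  choose B hB using hTr.exists_forall_paths_le hFB
  set N : ℕ → ℕ := fun k => Nat.pair k (B k) + 1
  have hN : ∀ k, ∀ f ∈ Paths T, Nat.pair k (f k) < N k := fun k f hf =>
    Nat.lt_succ_of_le ((StrictMono.monotone fun _ _ => Nat.pair_lt_pair_right k) (hB k f hf))
  have hstable : ∀ k n, N k ≤ n → a n k = a (N k) k := fun k n hn =>
    eq_of_graphChar_eqOn (fun m hm => (hag n m (by omega)).trans (hag (N k) m hm).symm)
      (hN k _ (ha n))
  refine ⟨fun k => a (N k) k, fun n => ?_, funext fun m => ?_⟩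
  · set n' := (Finset.range n).sup N
    have hagree : (List.range n).map (fun k => a (N k) k) = (List.range n).map (a n') :=
      List.map_congr_left fun k hk =>
        (hstable k n' (Finset.le_sup (Finset.mem_range.2 (List.mem_range.1 hk)))).symm
    exact hagree ▸ ha n' n
  · set n := max (N m.unpair.1) (m + 1)
    calc graphChar (fun k => a (N k) k) m = graphChar (a n) m :=
          graphChar_congr (hstable _ n (le_max_left _ _)).symm
      _ = g m := hag n m (by omega)

open Nat.Partrec Encodable Denumerable

theorem PrimrecRel.rePred_exists {α : Type*} [Primcodable α] {q : α → ℕ → Prop}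
    (hq : PrimrecRel q) : REPred fun a => ∃ n, q a n := by
  classical
  have hsearch : Partrec fun a => Nat.rfind fun n => Part.some (decide (q a n)) :=
    Partrec.rfind hq.decide.to_comp.partrec₂
  exact hsearch.dom_re.of_eq fun a => Nat.rfind_dom.trans
    ⟨fun ⟨n, hn, _⟩ => ⟨n, by simpa using hn⟩,
      fun ⟨n, hn⟩ => ⟨n, by simpa using hn, fun _ => trivial⟩⟩

theorem Part.dom_assert_some {α : Type*} {p : Prop} {a : α} :
    (Part.assert p fun _ => Part.some a).Dom ↔ p :=
  ⟨fun ⟨h, _⟩ => h, fun h => ⟨h, trivial⟩⟩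

theorem mem_enumOpApply {e x : ℕ} {B : Set ℕ} :
    x ∈ enumOpApply e B ↔
      ∃ u : List ℕ, ((ofNat Code e).eval (Nat.pair x (encode u))).Dom ∧ ∀ y ∈ u, y ∈ B :=
  ⟨fun ⟨u, hu, huB⟩ => ⟨ofNat (List ℕ) u, by simpa using hu, huB⟩,
    fun ⟨u, hu, huB⟩ => ⟨encode u, hu, by simpa using huB⟩⟩

theorem exists_enumOpApply_eq {R : ℕ → List ℕ → Prop}
    (hR : REPred fun p : ℕ × List ℕ => R p.1 p.2) :
    ∃ e, ∀ B, enumOpApply e B = {x | ∃ u : List ℕ, R x u ∧ ∀ y ∈ u, y ∈ B} := by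
  have hpartrec : Partrec fun z : ℕ =>
      (Part.assert (R z.unpair.1 (ofNat (List ℕ) z.unpair.2)) fun _ => Part.some ()).map
        encode :=
    (hR.comp ((Computable.fst.comp Computable.unpair).pair
      ((Computable.ofNat _).comp (Computable.snd.comp Computable.unpair)))).map
        (Computable.encode.comp Computable.snd).to₂
  obtain ⟨c, hc⟩ := Code.exists_code.1 (Partrec.nat_iff.1 hpartrec)
  refine ⟨encode c, fun B => Set.ext fun x => ?_⟩
  simp [mem_enumOpApply, hc, Part.dom_assert_some]

theorem exists_enumOpApply_eq_self : ∃ e, ∀ B, enumOpApply e B = B := by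
  have hmem : PrimrecRel fun (x : ℕ) (u : List ℕ) => x ∈ u :=
    ((PrimrecRel.exists_mem_list Primrec.eq).comp Primrec.snd Primrec.fst).of_eq fun p => by
      simp
  obtain ⟨e, he⟩ := exists_enumOpApply_eq hmem.computablePred.to_re
  refine ⟨e, fun B => ?_⟩
  rw [he]
  ext x
  exact ⟨fun ⟨u, hxu, huB⟩ => huB x hxu, fun hx => ⟨[x], List.mem_singleton_self x,
    fun y hy => List.mem_singleton.1 hy ▸ hx⟩⟩

theorem mem_codeTree {A : Set (List ℕ)} {x : ℕ} : x ∈ codeTree A ↔ ofNat (List ℕ) x ∈ A :=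
  ⟨by rintro ⟨σ, hσ, rfl⟩; simpa using hσ, fun h => ⟨_, h, encode_ofNat x⟩⟩

theorem Nat.Partrec.Code.eval_dom_iff_exists_evaln {c : Code} {n : ℕ} :
    (c.eval n).Dom ↔ ∃ k, (c.evaln k n).isSome := by
  simp only [Part.dom_iff_mem, Option.isSome_iff_exists]
  exact ⟨fun ⟨y, hy⟩ => (Code.evaln_complete.1 hy).imp fun k hk => ⟨y, hk⟩,
    fun ⟨k, y, hk⟩ => ⟨y, Code.evaln_sound hk⟩⟩

theorem exists_enumOpApply_eq_codeTree {R : List ℕ → List ℕ → Prop} (hR : PrimrecRel R)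
    (e₀ : ℕ) :
    ∃ e, ∀ B, enumOpApply e B = codeTree {σ | ∃ τ, R σ τ ∧ encode τ ∈ enumOpApply e₀ B} := by
  set c₀ : Code := ofNat Code e₀
  -- search simultaneously for the witness `t` and a step bound for `c₀`
  have hsearch : PrimrecRel fun (p : ℕ × List ℕ) (n : ℕ) =>
      R (ofNat (List ℕ) p.1) (ofNat (List ℕ) n.unpair.1) ∧
        (c₀.evaln n.unpair.2 (Nat.pair n.unpair.1 (encode p.2))).isSome = true := by
    have hfst : Primrec fun q : (ℕ × List ℕ) × ℕ => q.2.unpair.1 :=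
      Primrec.fst.comp (Primrec.unpair.comp Primrec.snd)
    refine PrimrecPred.and (hR.comp ((Primrec.ofNat _).comp (Primrec.fst.comp Primrec.fst))
      ((Primrec.ofNat _).comp hfst)) (Primrec.eq.comp ?_ (Primrec.const true))
    exact Primrec.option_isSome.comp (Code.primrec_evaln.comp
      (((Primrec.snd.comp (Primrec.unpair.comp Primrec.snd)).pair (Primrec.const c₀)).pair
        (Primrec₂.natPair.comp hfst (Primrec.encode.comp (Primrec.snd.comp Primrec.fst)))))
  obtain ⟨e, he⟩ := exists_enumOpApply_eq (R := fun x u =>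
    ∃ t, R (ofNat (List ℕ) x) (ofNat (List ℕ) t) ∧ (c₀.eval (Nat.pair t (encode u))).Dom)
    (hsearch.rePred_exists.of_eq fun p => by
      simp only [Code.eval_dom_iff_exists_evaln]
      exact ⟨fun ⟨n, hR, hk⟩ => ⟨n.unpair.1, hR, n.unpair.2, hk⟩,
        fun ⟨t, hR, k, hk⟩ => ⟨Nat.pair t k, by simpa using hR, by simpa using hk⟩⟩)
  refine ⟨e, fun B => Set.ext fun x => ?_⟩
  simp only [he, mem_codeTree, Set.mem_ofPred_eq, mem_enumOpApply]
  constructor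
  · rintro ⟨u, ⟨t, hR, hu⟩, huB⟩
    exact ⟨ofNat (List ℕ) t, hR, u, by simpa using hu, huB⟩
  · rintro ⟨τ, hR, u, hu, huB⟩
    exact ⟨u, ⟨encode τ, by simpa using hR, hu⟩, huB⟩

theorem enumLE_codeTree {A B : Set (List ℕ)} {R : List ℕ → List ℕ → Prop} (hR : PrimrecRel R)
    (hAB : ∀ σ, σ ∈ A ↔ ∃ τ ∈ B, R σ τ) : EnumLE (codeTree A) (codeTree B) := by
  obtain ⟨e₀, he₀⟩ := exists_enumOpApply_eq_self
  obtain ⟨e, he⟩ := exists_enumOpApply_eq_codeTree hR e₀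
  refine ⟨e, ?_⟩
  rw [he, he₀]
  congr 1
  ext σ
  simp [hAB, mem_codeTree, and_comm]

-- `σ` is an initial segment of `graphChar f` for every `f` extending `τ`.
def GraphCharPrefix (σ τ : List ℕ) : Prop :=
  (∀ m < σ.length, m.unpair.1 < τ.length) ∧ strPrefix σ (graphChar fun k => τ.getD k 0)

def MarksGraph (τ σ : List ℕ) : Prop :=
  ∀ k < τ.length, σ[Nat.pair k (τ.getD k 0)]? = some 1

theorem primrecRel_graphCharPrefix : PrimrecRel GraphCharPrefix := by
  have hbound : PrimrecRel fun (m : ℕ) (p : List ℕ × List ℕ) => m.unpair.1 < p.2.length :=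
    Primrec.nat_lt.comp (Primrec.fst.comp (Primrec.unpair.comp Primrec.fst))
      (Primrec.list_length.comp (Primrec.snd.comp Primrec.snd))
  have hchar : Primrec₂ fun (p : List ℕ × List ℕ) (m : ℕ) =>
      graphChar (fun k => p.2.getD k 0) m :=
    Primrec.ite (Primrec.eq.comp ((Primrec.list_getD 0).comp (Primrec.snd.comp Primrec.fst)
        (Primrec.fst.comp (Primrec.unpair.comp Primrec.snd)))
        (Primrec.snd.comp (Primrec.unpair.comp Primrec.snd)))
      (Primrec.const 1) (Primrec.const 0)
  have hlen : Primrec fun p : List ℕ × List ℕ => List.range p.1.length :=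
    Primrec.list_range.comp (Primrec.list_length.comp Primrec.fst)
  exact PrimrecPred.and ((hbound.forall_mem_list.comp hlen Primrec.id).of_eq fun p => by simp)
    (Primrec.eq.comp (Primrec.list_map hlen hchar) Primrec.fst)

theorem primrecRel_marksGraph : PrimrecRel MarksGraph := by
  have hmarked : PrimrecRel fun (k : ℕ) (p : List ℕ × List ℕ) =>
      p.2[Nat.pair k (p.1.getD k 0)]? = some 1 :=
    Primrec.eq.comp (Primrec.list_getElem?.comp (Primrec.snd.comp Primrec.snd)
      (Primrec₂.natPair.comp Primrec.fst
        ((Primrec.list_getD 0).comp (Primrec.fst.comp Primrec.snd) Primrec.fst)))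
      (Primrec.const (some 1))
  exact (hmarked.forall_mem_list.comp
    (Primrec.list_range.comp (Primrec.list_length.comp Primrec.fst)) Primrec.id).of_eq
    fun p => by simp [MarksGraph]

section GraphTree

variable {T : Set (List ℕ)}

theorem IsTree.mem_prefixTree_graphChar_iff (hTr : IsTree T) (hNL : NoLeaves T) {σ : List ℕ} :
    σ ∈ prefixTree (graphChar '' Paths T) ↔ ∃ τ ∈ T, GraphCharPrefix σ τ := by
  simp only [prefixTree, Set.exists_mem_image, Set.mem_ofPred_eq]
  constructor
  · rintro ⟨f, hf, hσ⟩
    refine ⟨_, hf σ.length, fun m hm => by simpa using (Nat.unpair_left_le m).trans_lt hm,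
      strPrefix_iff.2 fun i hi => ?_⟩
    rw [← strPrefix_iff.1 hσ i hi]
    exact graphChar_congr (getD_eq_of_strPrefix (strPrefix_map_range f _)
      (by simpa using (Nat.unpair_left_le i).trans_lt hi))
  · rintro ⟨τ, hτ, hbound, hσ⟩
    obtain ⟨f, hf, hτf⟩ := hTr.exists_mem_paths_strPrefix hNL hτ
    refine ⟨f, hf, strPrefix_iff.2 fun i hi => ?_⟩
    rw [← strPrefix_iff.1 hσ i hi]
    exact graphChar_congr (getD_eq_of_strPrefix hτf (hbound i hi)).symm

theorem IsTree.mem_iff_exists_marksGraph (hTr : IsTree T) (hNL : NoLeaves T) {τ : List ℕ} :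
    τ ∈ T ↔ ∃ σ ∈ prefixTree (graphChar '' Paths T), MarksGraph τ σ := by
  simp only [prefixTree, Set.exists_mem_image, Set.mem_ofPred_eq]
  constructor
  · intro hτ
    obtain ⟨f, hf, hτf⟩ := hTr.exists_mem_paths_strPrefix hNL hτ
    obtain ⟨N, hN⟩ :=
      ((Finset.range τ.length).image fun k => Nat.pair k (f k)).exists_nat_subset_range
    refine ⟨_, ⟨f, hf, strPrefix_map_range _ N⟩, fun k hk => ?_⟩
    have hkN : Nat.pair k (f k) < N := by
      simpa using hN (Finset.mem_image_of_mem _ (Finset.mem_range.2 hk))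
    rw [getD_eq_of_strPrefix hτf hk, List.getElem?_map, List.getElem?_range hkN]
    simp [graphChar_pair_eq_one]
  · rintro ⟨σ, ⟨f, hf, hσ⟩, hmarks⟩
    have hτf : strPrefix τ f := strPrefix_iff.2 fun k hk => by
      obtain ⟨hlt, hone⟩ := List.getElem?_eq_some_iff.1 (hmarks k hk)
      rw [← strPrefix_iff.1 hσ _ hlt, graphChar_pair_eq_one, List.getD_eq_getElem] at hone
      exact hone
    exact hτf ▸ hf τ.length

end GraphTree

/-- For every uniformly e-pointed tree `T` w.r.t. functions there is a uniformly
e-pointed tree `S ⊆ 2^{<ω}` w.r.t. sets with `S ≡ₑ T`, whose paths are exactly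
the characteristic functions of the graphs of the paths of `T`. -/
theorem stmt9 (T : Set (List ℕ)) (hT : UEPfun T) :
    ∃ S : Set (List ℕ), UEPset S ∧ EnumEquiv (codeTree S) (codeTree T) ∧
      Paths S =
        (fun f => fun m : ℕ => if f m.unpair.1 = m.unpair.2 then 1 else 0) ''
          Paths T := by
  obtain ⟨hTr, hFB, hNL, e₀, he₀⟩ := hT
  have hS (σ : List ℕ) := hTr.mem_prefixTree_graphChar_iff hNL (σ := σ)
  have hpaths := hTr.paths_prefixTree_graphChar hFB
  obtain ⟨e, he⟩ := exists_enumOpApply_eq_codeTree primrecRel_graphCharPrefix e₀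
  refine ⟨prefixTree (graphChar '' Paths T), ⟨isTree_prefixTree, ?_, noLeaves_prefixTree, e, ?_⟩,
    ⟨enumLE_codeTree primrecRel_graphCharPrefix hS,
      enumLE_codeTree primrecRel_marksGraph fun τ => hTr.mem_iff_exists_marksGraph hNL⟩, hpaths⟩
  · exact le_one_of_mem_prefixTree <| by rintro _ ⟨f, -, rfl⟩; exact graphChar_le_one f
  · rw [hpaths]
    rintro _ ⟨f, hf, rfl⟩
    rw [setOf_graphChar_eq_one, he, he₀ f hf]
    congr 1
    ext σ
    simp [hS, mem_codeTree, and_comm]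
end
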